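/- Every PDLsf sentence ξ is equivalent to some FO³[→,◁,≤] sentence; every PDLsf event formula φ is equivalent to some FO³[→,◁,≤] formula with one free variable; and every PDLsf path formula π is equivalent to some FO³[→,◁,≤] formula with two free variables. -/

import Mathlib

set_option maxHeartbeats 1000000

/-! ## Message sequence charts -/

/-- A message sequence chart (MSC) over processes `P` and labels `Lab`.
Events are natural numbers; `E` is the finite nonempty set of events. -/
structure MSC (P : Type) (Lab : Type) where
  /-- the finite set of events -/
  E : Finset ℕ
  nonemptyE : E.Nonempty
  /-- process edges `→` (direct successor on a process) -/
  proc : ℕ → ℕ → Prop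
  /-- message edges `◁` -/
  msg : ℕ → ℕ → Prop
  /-- location (process) of each event -/
  loc : ℕ → P
  /-- label of each event -/
  lab : ℕ → Lab
  proc_mem : ∀ e f, proc e f → e ∈ E ∧ f ∈ E
  msg_mem : ∀ e f, msg e f → e ∈ E ∧ f ∈ E
  proc_loc : ∀ e f, proc e f → loc e = loc f
  msg_loc : ∀ e f, msg e f → loc e ≠ loc f
  /-- on each process, any two events are comparable w.r.t. `→⁺` -/
  proc_total : ∀ e f, e ∈ E → f ∈ E → loc e = loc f →
    e = f ∨ Relation.TransGen proc e f ∨ Relation.TransGen proc f e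
  /-- `→` is the direct-successor (covering) relation of the order `→⁺` -/
  proc_cover : ∀ e f, proc e f →
    ¬ ∃ g, Relation.TransGen proc e g ∧ Relation.TransGen proc g f
  /-- every event belongs to at most one message edge -/
  msg_once : ∀ e f e' f', msg e f → msg e' f' →
    (e = e' ∨ e = f' ∨ f = e' ∨ f = f') → e = e' ∧ f = f'
  /-- FIFO condition -/
  fifo : ∀ e f e' f', msg e f → msg e' f' → loc e = loc e' → loc f = loc f' →
    (Relation.ReflTransGen proc e e' ↔ Relation.ReflTransGen proc f f')
  /-- `→ ∪ ◁` is acyclic -/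
  acyclic : ∀ e, ¬ Relation.TransGen (fun a b => proc a b ∨ msg a b) e e

namespace MSC

variable {P Lab : Type}

/-- `≤proc`, the reflexive transitive closure of `→`. -/
def procLe (M : MSC P Lab) : ℕ → ℕ → Prop := Relation.ReflTransGen M.proc

/-- `<proc`, the transitive closure of `→`. -/
def procLt (M : MSC P Lab) : ℕ → ℕ → Prop := Relation.TransGen M.proc

/-- the happened-before relation `≤ = (→ ∪ ◁)*`. -/
def hb (M : MSC P Lab) : ℕ → ℕ → Prop :=
  Relation.ReflTransGen (fun a b => M.proc a b ∨ M.msg a b)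

/-- Relabelling an MSC (same events and edges, new labelling). -/
def relabel {Γ : Type} (M : MSC P Lab) (γ : ℕ → Γ) : MSC P Γ where
  E := M.E
  nonemptyE := M.nonemptyE
  proc := M.proc
  msg := M.msg
  loc := M.loc
  lab := γ
  proc_mem := M.proc_mem
  msg_mem := M.msg_mem
  proc_loc := M.proc_loc
  msg_loc := M.msg_loc
  proc_total := M.proc_total
  proc_cover := M.proc_cover
  msg_once := M.msg_once
  fifo := M.fifo
  acyclic := M.acyclic

end MSC

/-! ## Star-free PDL -/

mutual
/-- Event formulas of star-free PDL. -/
inductive EF (P Lab : Type) : Type where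
  | proc : P → EF P Lab
  | lab : Lab → EF P Lab
  | or : EF P Lab → EF P Lab → EF P Lab
  | not : EF P Lab → EF P Lab
  | dia : PF P Lab → EF P Lab → EF P Lab
  | loop : PF P Lab → EF P Lab
/-- Path formulas of star-free PDL. -/
inductive PF (P Lab : Type) : Type where
  | next : PF P Lab
  | prev : PF P Lab
  | msg : P → P → PF P Lab
  | msgInv : P → P → PF P Lab
  | nextG : EF P Lab → PF P Lab
  | prevG : EF P Lab → PF P Lab
  | jump : P → P → PF P Lab
  | test : EF P Lab → PF P Lab
  | comp : PF P Lab → PF P Lab → PF P Lab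
  | union : PF P Lab → PF P Lab → PF P Lab
  | inter : PF P Lab → PF P Lab → PF P Lab
  | compl : PF P Lab → PF P Lab
end

mutual
/-- Satisfaction of event formulas at an event. -/
def EF.sat {P Lab : Type} (M : MSC P Lab) : EF P Lab → ℕ → Prop
  | .proc p, e => e ∈ M.E ∧ M.loc e = p
  | .lab a, e => e ∈ M.E ∧ M.lab e = a
  | .or φ ψ, e => EF.sat M φ e ∨ EF.sat M ψ e
  | .not φ, e => e ∈ M.E ∧ ¬ EF.sat M φ e
  | .dia π φ, e => ∃ f, PF.sem M π e f ∧ EF.sat M φ f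
  | .loop π, e => PF.sem M π e e
/-- Semantics of path formulas as binary relations on events. -/
def PF.sem {P Lab : Type} (M : MSC P Lab) : PF P Lab → ℕ → ℕ → Prop
  | .next, e, f => M.proc e f
  | .prev, e, f => M.proc f e
  | .msg p q, e, f => M.msg e f ∧ M.loc e = p ∧ M.loc f = q
  | .msgInv p q, e, f => M.msg f e ∧ M.loc f = p ∧ M.loc e = q
  | .nextG φ, e, f => M.procLt e f ∧ ∀ g, M.procLt e g → M.procLt g f → EF.sat M φ g
  | .prevG φ, e, f => M.procLt f e ∧ ∀ g, M.procLt f g → M.procLt g e → EF.sat M φ g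
  | .jump p r, e, f => e ∈ M.E ∧ f ∈ M.E ∧ M.loc e = p ∧ M.loc f = r
  | .test φ, e, f => e = f ∧ EF.sat M φ e
  | .comp π₁ π₂, e, f => ∃ g, PF.sem M π₁ e g ∧ PF.sem M π₂ g f
  | .union π₁ π₂, e, f => PF.sem M π₁ e f ∨ PF.sem M π₂ e f
  | .inter π₁ π₂, e, f => PF.sem M π₁ e f ∧ PF.sem M π₂ e f
  | .compl π, e, f => e ∈ M.E ∧ f ∈ M.E ∧ ¬ PF.sem M π e f
end

/-- Sentences of star-free PDL. -/
inductive PDLS (P Lab : Type) : Type where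
  | ex : EF P Lab → PDLS P Lab
  | or : PDLS P Lab → PDLS P Lab → PDLS P Lab
  | not : PDLS P Lab → PDLS P Lab

/-- Satisfaction of PDL sentences. -/
def PDLS.sat {P Lab : Type} (M : MSC P Lab) : PDLS P Lab → Prop
  | .ex φ => ∃ e ∈ M.E, EF.sat M φ e
  | .or ξ ζ => PDLS.sat M ξ ∨ PDLS.sat M ζ
  | .not ξ => ¬ PDLS.sat M ξ

/-- The four optional operators of star-free PDL. -/
inductive PDLOp : Type where
  | loop | union | inter | compl
deriving DecidableEq

mutual
/-- `EF.inFrag R φ` : the event formula `φ` belongs to the fragment `PDLsf[R]`. -/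
def EF.inFrag {P Lab : Type} (R : Set PDLOp) : EF P Lab → Prop
  | .proc _ => True
  | .lab _ => True
  | .or φ ψ => EF.inFrag R φ ∧ EF.inFrag R ψ
  | .not φ => EF.inFrag R φ
  | .dia π φ => PF.inFrag R π ∧ EF.inFrag R φ
  | .loop π => PDLOp.loop ∈ R ∧ PF.inFrag R π
/-- `PF.inFrag R π` : the path formula `π` belongs to the fragment `PDLsf[R]`. -/
def PF.inFrag {P Lab : Type} (R : Set PDLOp) : PF P Lab → Prop
  | .next => True
  | .prev => True
  | .msg _ _ => True
  | .msgInv _ _ => True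
  | .nextG φ => EF.inFrag R φ
  | .prevG φ => EF.inFrag R φ
  | .jump _ _ => True
  | .test φ => EF.inFrag R φ
  | .comp π₁ π₂ => PF.inFrag R π₁ ∧ PF.inFrag R π₂
  | .union π₁ π₂ => PDLOp.union ∈ R ∧ PF.inFrag R π₁ ∧ PF.inFrag R π₂
  | .inter π₁ π₂ => PDLOp.inter ∈ R ∧ PF.inFrag R π₁ ∧ PF.inFrag R π₂
  | .compl π => PDLOp.compl ∈ R ∧ PF.inFrag R π
end

/-- `PDLS.inFrag R ξ` : the sentence `ξ` belongs to the fragment `PDLsf[R]`. -/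
def PDLS.inFrag {P Lab : Type} (R : Set PDLOp) : PDLS P Lab → Prop
  | .ex φ => EF.inFrag R φ
  | .or ξ ζ => PDLS.inFrag R ξ ∧ PDLS.inFrag R ζ
  | .not ξ => PDLS.inFrag R ξ

/-- Conjunction of event formulas (derived operator). -/
def EF.and {P Lab : Type} (φ ψ : EF P Lab) : EF P Lab :=
  .not (.or (.not φ) (.not ψ))

/-- `isMinOf M π e m` : `m` is the `≤proc`-least element of `⟦π⟧_M(e)`
(in particular `⟦π⟧_M(e)` is nonempty). -/
def isMinOf {P Lab : Type} (M : MSC P Lab) (π : PF P Lab) (e m : ℕ) : Prop :=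
  PF.sem M π e m ∧ ∀ f, PF.sem M π e f → M.procLe m f

/-- `isMaxOf M π e m` : `m` is the `≤proc`-greatest element of `⟦π⟧_M(e)`
(in particular `⟦π⟧_M(e)` is nonempty). -/
def isMaxOf {P Lab : Type} (M : MSC P Lab) (π : PF P Lab) (e m : ℕ) : Prop :=
  PF.sem M π e m ∧ ∀ f, PF.sem M π e f → M.procLe f m

/-! ## MSO/FO logic over MSCs -/

/-- Formulas of MSO over MSCs: first-order kernel with atoms `p(x)`, `a(x)`,
`x = y`, `x → y`, `x ◁ y`, `x ≤ y` and additionally `x ∈ X_k` (monadic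
second-order variables, used for the EMSO prefix). -/
inductive FOS (P Lab : Type) : Type where
  | pred : P → ℕ → FOS P Lab
  | lab : Lab → ℕ → FOS P Lab
  | eq : ℕ → ℕ → FOS P Lab
  | edge : ℕ → ℕ → FOS P Lab
  | medge : ℕ → ℕ → FOS P Lab
  | le : ℕ → ℕ → FOS P Lab
  | inSet : ℕ → ℕ → FOS P Lab
  | or : FOS P Lab → FOS P Lab → FOS P Lab
  | not : FOS P Lab → FOS P Lab
  | ex : ℕ → FOS P Lab → FOS P Lab

/-- Satisfaction, with a first-order valuation `ν` and a second-order valuation `σ`.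
First-order quantification ranges over the events of the MSC. -/
def FOS.sat {P Lab : Type} (M : MSC P Lab) : FOS P Lab → (ℕ → ℕ) → (ℕ → Set ℕ) → Prop
  | .pred p x, ν, _ => M.loc (ν x) = p
  | .lab a x, ν, _ => M.lab (ν x) = a
  | .eq x y, ν, _ => ν x = ν y
  | .edge x y, ν, _ => M.proc (ν x) (ν y)
  | .medge x y, ν, _ => M.msg (ν x) (ν y)
  | .le x y, ν, _ => M.hb (ν x) (ν y)
  | .inSet x k, ν, σ => ν x ∈ σ k
  | .or Φ Ψ, ν, σ => FOS.sat M Φ ν σ ∨ FOS.sat M Ψ ν σ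
  | .not Φ, ν, σ => ¬ FOS.sat M Φ ν σ
  | .ex x Φ, ν, σ => ∃ e ∈ M.E, FOS.sat M Φ (Function.update ν x e) σ

/-- Free first-order variables. -/
def FOS.free {P Lab : Type} : FOS P Lab → Finset ℕ
  | .pred _ x => {x}
  | .lab _ x => {x}
  | .eq x y => {x, y}
  | .edge x y => {x, y}
  | .medge x y => {x, y}
  | .le x y => {x, y}
  | .inSet x _ => {x}
  | .or Φ Ψ => FOS.free Φ ∪ FOS.free Ψ
  | .not Φ => FOS.free Φ
  | .ex x Φ => (FOS.free Φ).erase x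

/-- All first-order variables occurring (free or bound). -/
def FOS.vars {P Lab : Type} : FOS P Lab → Finset ℕ
  | .pred _ x => {x}
  | .lab _ x => {x}
  | .eq x y => {x, y}
  | .edge x y => {x, y}
  | .medge x y => {x, y}
  | .le x y => {x, y}
  | .inSet x _ => {x}
  | .or Φ Ψ => FOS.vars Φ ∪ FOS.vars Ψ
  | .not Φ => FOS.vars Φ
  | .ex x Φ => insert x (FOS.vars Φ)

/-- A formula is first-order (`FO[→,◁,≤]`) iff it contains no set atoms. -/
def FOS.noSets {P Lab : Type} : FOS P Lab → Prop
  | .pred _ _ => True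
  | .lab _ _ => True
  | .eq _ _ => True
  | .edge _ _ => True
  | .medge _ _ => True
  | .le _ _ => True
  | .inSet _ _ => False
  | .or Φ Ψ => FOS.noSets Φ ∧ FOS.noSets Ψ
  | .not Φ => FOS.noSets Φ
  | .ex _ Φ => FOS.noSets Φ

/-! ## Communicating finite-state machines -/

/-- Actions of a process: internal `⟨a⟩`, send `!(a,m,q)`, receive `?(a,m,q)`. -/
inductive CAct (P Lab Msg : Type) : Type where
  | int : Lab → CAct P Lab Msg
  | snd : Lab → Msg → P → CAct P Lab Msg
  | rcv : Lab → Msg → P → CAct P Lab Msg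

/-- The label performed by an action. -/
def CAct.label {P Lab Msg : Type} : CAct P Lab Msg → Lab
  | .int a => a
  | .snd a _ _ => a
  | .rcv a _ _ => a

/-- A communicating finite-state machine over `P` and `Lab`. -/
structure CFM (P Lab : Type) where
  /-- states -/
  S : Type
  finS : Fintype S
  /-- messages -/
  Msg : Type
  finMsg : Fintype Msg
  /-- initial state of each process -/
  ι : P → S
  /-- transition relation of each process -/
  Δ : P → S → CAct P Lab Msg → S → Prop
  Δ_snd : ∀ p s a m q s', Δ p s (.snd a m q) s' → q ≠ p
  Δ_rcv : ∀ p s a m q s', Δ p s (.rcv a m q) s' → q ≠ p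
  /-- acceptance condition -/
  Acc : (P → S) → Prop

/-- Existence of an accepting run of a CFM on an MSC. -/
def CFM.Accepts {P Lab : Type} (A : CFM P Lab) (M : MSC P Lab) : Prop :=
  ∃ (src tgt : ℕ → A.S) (act : ℕ → CAct P Lab A.Msg),
    (∀ e ∈ M.E, A.Δ (M.loc e) (src e) (act e) (tgt e)) ∧
    (∀ e ∈ M.E, (act e).label = M.lab e) ∧
    (∀ e ∈ M.E, (¬ ∃ f, M.proc f e) → src e = A.ι (M.loc e)) ∧
    (∀ e f, M.proc e f → tgt e = src f) ∧
    (∀ e ∈ M.E, (¬ ∃ f, M.msg e f) → (¬ ∃ f, M.msg f e) → ∃ a, act e = .int a) ∧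
    (∀ e f, M.msg e f →
      ∃ a a' m, act e = .snd a m (M.loc f) ∧ act f = .rcv a' m (M.loc e)) ∧
    (∃ fin : P → A.S,
      (∀ p, (∀ e ∈ M.E, M.loc e ≠ p) → fin p = A.ι p) ∧
      (∀ e ∈ M.E, (¬ ∃ f, M.proc e f) → fin (M.loc e) = tgt e) ∧
      A.Acc fin)

/-- The language of a CFM. -/
def CFM.lang {P Lab : Type} (A : CFM P Lab) : Set (MSC P Lab) := {M | A.Accepts M}

/-! ## Letter-to-letter MSC transducers -/

/-- The relation accepted by a letter-to-letter MSC transducer from `Lab` to `Γ`,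
i.e., a CFM over `P` and `Lab × Γ`. -/
def Ltrans {P Lab Γ : Type} (A : CFM P (Lab × Γ)) (M : MSC P Lab) (N : MSC P Γ) : Prop :=
  ∃ γ : ℕ → Γ, N = M.relabel γ ∧ A.Accepts (M.relabel fun e => (M.lab e, γ e))

/-- `M_φ` : the MSC over `Bool` obtained from `M` by labelling each event with
the truth value of the event formula `φ`. -/
noncomputable def MSC.evalEF {P Lab : Type} (M : MSC P Lab) (φ : EF P Lab) : MSC P Bool :=
  M.relabel fun e => @ite Bool (EF.sat M φ e) (Classical.propDecidable _) true false

/-! ## Boolean combinations -/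

/-- Boolean combinations over atoms of type `α`. -/
inductive BC (α : Type) : Type where
  | atom : α → BC α
  | or : BC α → BC α → BC α
  | not : BC α → BC α

/-- Evaluation of a boolean combination given truth values of the atoms. -/
def BC.eval {α : Type} (v : α → Prop) : BC α → Prop
  | .atom a => v a
  | .or b c => BC.eval v b ∨ BC.eval v c
  | .not b => ¬ BC.eval v b

/-- The atoms occurring in a boolean combination. -/
def BC.atoms {α : Type} : BC α → Set α
  | .atom a => {a}
  | .or b c => BC.atoms b ∪ BC.atoms c
  | .not b => BC.atoms b

/-! ## Bounded MSCs -/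

/-- `r` is a linearization of `M`: a total order on the events containing
the happened-before relation. -/
def IsLinearization {P Lab : Type} (M : MSC P Lab) (r : ℕ → ℕ → Prop) : Prop :=
  (∀ e ∈ M.E, r e e) ∧
  (∀ e ∈ M.E, ∀ f ∈ M.E, r e f → r f e → e = f) ∧
  (∀ e ∈ M.E, ∀ f ∈ M.E, ∀ g ∈ M.E, r e f → r f g → r e g) ∧
  (∀ e ∈ M.E, ∀ f ∈ M.E, r e f ∨ r f e) ∧
  (∀ e ∈ M.E, ∀ f ∈ M.E, M.hb e f → r e f)

/-- `r` is a `B`-bounded linearization of `M`: at any point, each channel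
contains at most `B` pending messages. -/
def IsBBoundedLin {P Lab : Type} (M : MSC P Lab) (r : ℕ → ℕ → Prop) (B : ℕ) : Prop :=
  IsLinearization M r ∧
  ∀ g ∈ M.E, ∀ p q : P, p ≠ q →
    Set.ncard {ef : ℕ × ℕ | M.msg ef.1 ef.2 ∧ M.loc ef.1 = p ∧ M.loc ef.2 = q ∧
      r ef.1 g ∧ ¬ r ef.2 g} ≤ B

/-- `M` is `∃B`-bounded: some linearization of `M` is `B`-bounded. -/
def ExistsBBounded {P Lab : Type} (M : MSC P Lab) (B : ℕ) : Prop :=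
  ∃ r : ℕ → ℕ → Prop, IsBBoundedLin M r B

/-- `g` is a send event on channel `(p,q)`. -/
def isSendOn {P Lab : Type} (M : MSC P Lab) (p q : P) (g : ℕ) : Prop :=
  M.loc g = p ∧ ∃ h, M.msg g h ∧ M.loc h = q

/-- `revB M B f g` : `f` is a receive event with matching send `e` on some
channel `(p,q)`, and `g` is the `B`-th send on channel `(p,q)` strictly after `e`. -/
def revB {P Lab : Type} (M : MSC P Lab) (B : ℕ) (f g : ℕ) : Prop :=
  ∃ e, M.msg e f ∧ isSendOn M (M.loc e) (M.loc f) g ∧ M.procLt e g ∧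
    Set.ncard {g' | isSendOn M (M.loc e) (M.loc f) g' ∧ M.procLt e g' ∧ M.procLe g' g} = B

/-- `≤_B = (≤ ∪ rev_B)*`. -/
def leB {P Lab : Type} (M : MSC P Lab) (B : ℕ) : ℕ → ℕ → Prop :=
  Relation.ReflTransGen (fun a b => (M.proc a b ∨ M.msg a b) ∨ revB M B a b)

/-- `<_B`, the strict part of `≤_B`. -/
def ltB {P Lab : Type} (M : MSC P Lab) (B : ℕ) (e f : ℕ) : Prop :=
  leB M B e f ∧ ¬ leB M B f e

/-- `e ∥_B f` : incomparable w.r.t. `≤_B`. -/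
def parB {P Lab : Type} (M : MSC P Lab) (B : ℕ) (e f : ℕ) : Prop :=
  ¬ leB M B e f ∧ ¬ leB M B f e

/-- `↑_B e = {g : e ≤_B g}`. -/
def upB {P Lab : Type} (M : MSC P Lab) (B : ℕ) (e : ℕ) : Set ℕ :=
  {g | leB M B e g}

/-- The order `≺_B` (w.r.t. a fixed total order on `P`): `e ≺_B f` iff `e <_B f`, or
`e ∥_B f` and the `⊑`-minimum of `loc(↑_B e \ ↑_B f)` is strictly below the
`⊑`-minimum of `loc(↑_B f \ ↑_B e)`. -/
def precB {P Lab : Type} [LinearOrder P] (M : MSC P Lab) (B : ℕ) (e f : ℕ) : Prop :=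
  ltB M B e f ∨
    (parB M B e f ∧ ∃ p ∈ M.loc '' (upB M B e \ upB M B f),
      ∀ q ∈ M.loc '' (upB M B f \ upB M B e), p < q)

/-!
The translation is by structural induction and keeps only three variable names alive. An event
formula is translated with its event bound to one name `x`, a path formula with its two events
bound to distinct names `x`, `y`. Every quantifier the translation introduces (for `⟨π⟩φ`,
`Loop(π)`, `π₁·π₂` and the events strictly between the endpoints of `→_φ`) needs only the one or
two names already in use, so it can reuse the remaining name. The one relation not given
directly by the signature, `<proc`, is `≤` restricted to pairs of distinct events on a common
process; "on a common process" is a finite disjunction over `P`.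
-/

open Function

namespace MSC

variable {P Lab : Type} (M : MSC P Lab)

lemma procLt_mem {e f : ℕ} (h : M.procLt e f) : e ∈ M.E ∧ f ∈ M.E := by
  induction h with
  | single h => exact M.proc_mem _ _ h
  | tail _ h ih => exact ⟨ih.1, (M.proc_mem _ _ h).2⟩

lemma procLt_loc {e f : ℕ} (h : M.procLt e f) : M.loc e = M.loc f := by
  induction h with
  | single h => exact M.proc_loc _ _ h
  | tail _ h ih => exact ih.trans (M.proc_loc _ _ h)

lemma procLt_hb {e f : ℕ} (h : M.procLt e f) : M.hb e f :=
  (Relation.TransGen.mono (fun _ _ h => Or.inl h) _ _ h).to_reflTransGen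

lemma procLt_irrefl (e : ℕ) : ¬ M.procLt e e :=
  fun h => M.acyclic e (Relation.TransGen.mono (fun _ _ h => Or.inl h) _ _ h)

lemma hb_antisymm {e f : ℕ} (h : M.hb e f) (h' : M.hb f e) : e = f := by
  rcases Relation.reflTransGen_iff_eq_or_transGen.mp h' with rfl | h'
  · rfl
  · exact absurd (h'.trans_left h) (M.acyclic f)

lemma procLt_iff {e f : ℕ} (he : e ∈ M.E) (hf : f ∈ M.E) :
    M.procLt e f ↔ M.hb e f ∧ e ≠ f ∧ M.loc e = M.loc f := by
  refine ⟨fun h => ⟨M.procLt_hb h, ?_, M.procLt_loc h⟩, fun ⟨hhb, hne, hloc⟩ => ?_⟩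
  · rintro rfl
    exact M.procLt_irrefl e h
  · rcases M.proc_total e f he hf hloc with heq | h | h
    · exact absurd heq hne
    · exact h
    · exact absurd (M.hb_antisymm hhb (M.procLt_hb h)) hne

end MSC

variable {P Lab : Type} {M : MSC P Lab}

mutual
theorem EF.mem_of_sat : ∀ {φ : EF P Lab} {e : ℕ}, EF.sat M φ e → e ∈ M.E
  | .proc _, _, h => h.1
  | .lab _, _, h => h.1
  | .or _ _, _, h => h.elim EF.mem_of_sat EF.mem_of_sat
  | .not _, _, h => h.1
  | .dia _ _, _, ⟨_, h, _⟩ => (PF.mem_of_sem h).1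
  | .loop _, _, h => (PF.mem_of_sem h).1

theorem PF.mem_of_sem : ∀ {π : PF P Lab} {e f : ℕ}, PF.sem M π e f → e ∈ M.E ∧ f ∈ M.E
  | .next, _, _, h => M.proc_mem _ _ h
  | .prev, _, _, h => (M.proc_mem _ _ h).symm
  | .msg _ _, _, _, h => M.msg_mem _ _ h.1
  | .msgInv _ _, _, _, h => (M.msg_mem _ _ h.1).symm
  | .nextG _, _, _, h => M.procLt_mem h.1
  | .prevG _, _, _, h => (M.procLt_mem h.1).symm
  | .jump _ _, _, _, h => ⟨h.1, h.2.1⟩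
  | .test _, _, _, ⟨rfl, h⟩ => ⟨EF.mem_of_sat h, EF.mem_of_sat h⟩
  | .comp _ _, _, _, ⟨_, h₁, h₂⟩ => ⟨(PF.mem_of_sem h₁).1, (PF.mem_of_sem h₂).2⟩
  | .union _ _, _, _, h => h.elim PF.mem_of_sem PF.mem_of_sem
  | .inter _ _, _, _, h => PF.mem_of_sem h.1
  | .compl _, _, _, h => ⟨h.1, h.2.1⟩
end

inductive FO3 (P Lab : Type) : Type where
  | pred : P → Fin 3 → FO3 P Lab
  | lab : Lab → Fin 3 → FO3 P Lab
  | eq : Fin 3 → Fin 3 → FO3 P Lab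
  | edge : Fin 3 → Fin 3 → FO3 P Lab
  | medge : Fin 3 → Fin 3 → FO3 P Lab
  | le : Fin 3 → Fin 3 → FO3 P Lab
  | or : FO3 P Lab → FO3 P Lab → FO3 P Lab
  | not : FO3 P Lab → FO3 P Lab
  | ex : Fin 3 → FO3 P Lab → FO3 P Lab

namespace FO3

def sat (M : MSC P Lab) : FO3 P Lab → (Fin 3 → ℕ) → Prop
  | .pred p x, ν => M.loc (ν x) = p
  | .lab a x, ν => M.lab (ν x) = a
  | .eq x y, ν => ν x = ν y
  | .edge x y, ν => M.proc (ν x) (ν y)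
  | .medge x y, ν => M.msg (ν x) (ν y)
  | .le x y, ν => M.hb (ν x) (ν y)
  | .or Φ Ψ, ν => Φ.sat M ν ∨ Ψ.sat M ν
  | .not Φ, ν => ¬ Φ.sat M ν
  | .ex x Φ, ν => ∃ e ∈ M.E, Φ.sat M (update ν x e)

def free : FO3 P Lab → Finset (Fin 3)
  | .pred _ x | .lab _ x => {x}
  | .eq x y | .edge x y | .medge x y | .le x y => {x, y}
  | .or Φ Ψ => Φ.free ∪ Ψ.free
  | .not Φ => Φ.free
  | .ex x Φ => Φ.free.erase x

def toFOS : FO3 P Lab → FOS P Lab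
  | .pred p x => .pred p x
  | .lab a x => .lab a x
  | .eq x y => .eq x y
  | .edge x y => .edge x y
  | .medge x y => .medge x y
  | .le x y => .le x y
  | .or Φ Ψ => .or Φ.toFOS Ψ.toFOS
  | .not Φ => .not Φ.toFOS
  | .ex x Φ => .ex x Φ.toFOS

theorem noSets_toFOS : ∀ Φ : FO3 P Lab, Φ.toFOS.noSets
  | .pred .. | .lab .. | .eq .. | .edge .. | .medge .. | .le .. => trivial
  | .or Φ Ψ => ⟨noSets_toFOS Φ, noSets_toFOS Ψ⟩
  | .not Φ | .ex _ Φ => noSets_toFOS Φ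

theorem vars_toFOS_subset : ∀ Φ : FO3 P Lab, Φ.toFOS.vars ⊆ Finset.range 3
  | .pred _ x | .lab _ x => by simp [toFOS, FOS.vars]
  | .eq x y | .edge x y | .medge x y | .le x y => by
      simp [toFOS, FOS.vars, Finset.insert_subset_iff]
  | .or Φ Ψ => Finset.union_subset (vars_toFOS_subset Φ) (vars_toFOS_subset Ψ)
  | .not Φ => vars_toFOS_subset Φ
  | .ex x Φ => Finset.insert_subset (by simp) (vars_toFOS_subset Φ)

theorem free_toFOS : ∀ Φ : FO3 P Lab, Φ.toFOS.free = Φ.free.image Fin.val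
  | .pred _ x | .lab _ x => by simp [toFOS, FOS.free, free]
  | .eq x y | .edge x y | .medge x y | .le x y => by
      simp [toFOS, FOS.free, free, Finset.image_insert]
  | .or Φ Ψ => by
      simp only [toFOS, FOS.free, free, free_toFOS Φ, free_toFOS Ψ, Finset.image_union]
  | .not Φ => free_toFOS Φ
  | .ex x Φ => by
      simp only [toFOS, FOS.free, free, free_toFOS Φ, Finset.image_erase Fin.val_injective]

theorem sat_toFOS (σ : ℕ → Set ℕ) : ∀ (Φ : FO3 P Lab) (ν : ℕ → ℕ),
    FOS.sat M Φ.toFOS ν σ ↔ Φ.sat M (ν ∘ Fin.val)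
  | .pred .. , _ | .lab .., _ | .eq .., _ | .edge .., _ | .medge .., _ | .le .., _ => Iff.rfl
  | .or Φ Ψ, ν => or_congr (sat_toFOS σ Φ ν) (sat_toFOS σ Ψ ν)
  | .not Φ, ν => not_congr (sat_toFOS σ Φ ν)
  | .ex x Φ, ν => by
      simp only [toFOS, FOS.sat, sat, sat_toFOS σ Φ,
        update_comp_eq_of_injective _ Fin.val_injective]


def and (Φ Ψ : FO3 P Lab) : FO3 P Lab := .not (.or (.not Φ) (.not Ψ))

@[simp] lemma sat_and {Φ Ψ : FO3 P Lab} {ν : Fin 3 → ℕ} :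
    (Φ.and Ψ).sat M ν ↔ Φ.sat M ν ∧ Ψ.sat M ν := by
  simp only [and, sat, not_or, not_not]

@[simp] lemma free_and {Φ Ψ : FO3 P Lab} : (Φ.and Ψ).free = Φ.free ∪ Ψ.free := rfl

lemma sat_ex_iff {x : Fin 3} {Φ : FO3 P Lab} {ν : Fin 3 → ℕ} {R : ℕ → Prop}
    (hR : ∀ g, R g → g ∈ M.E) (h : ∀ g ∈ M.E, Φ.sat M (update ν x g) ↔ R g) :
    (ex x Φ).sat M ν ↔ ∃ g, R g :=
  ⟨fun ⟨g, hg, hΦ⟩ => ⟨g, (h g hg).1 hΦ⟩, fun ⟨g, hRg⟩ => ⟨g, hR g hRg, (h g (hR g hRg)).2 hRg⟩⟩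

def sameLocAmong (x y : Fin 3) : List P → FO3 P Lab
  | [] => .not (.eq x x)
  | p :: ps => .or (.and (.pred p x) (.pred p y)) (sameLocAmong x y ps)

lemma sat_sameLocAmong {x y : Fin 3} {ν : Fin 3 → ℕ} :
    ∀ {ps : List P}, (sameLocAmong (Lab := Lab) x y ps).sat M ν ↔
      M.loc (ν x) ∈ ps ∧ M.loc (ν x) = M.loc (ν y)
  | [] => by simp [sameLocAmong, sat]
  | p :: ps => by
      simp only [sameLocAmong, sat, sat_and, sat_sameLocAmong, List.mem_cons]
      grind

lemma free_sameLocAmong_subset {x y : Fin 3} :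
    ∀ {ps : List P}, (sameLocAmong (Lab := Lab) x y ps).free ⊆ {x, y}
  | [] => by simp [sameLocAmong, free]
  | p :: ps => by
      simp only [sameLocAmong, free, free_and]
      exact Finset.union_subset (by simp) free_sameLocAmong_subset

variable [Fintype P]

noncomputable def procLt (x y : Fin 3) : FO3 P Lab :=
  .and (.le x y) (.and (.not (.eq x y)) (sameLocAmong x y Finset.univ.toList))

lemma sat_procLt {x y : Fin 3} {ν : Fin 3 → ℕ} (hx : ν x ∈ M.E) (hy : ν y ∈ M.E) :
    (procLt (Lab := Lab) x y).sat M ν ↔ M.procLt (ν x) (ν y) := by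
  simp [procLt, sat, sat_sameLocAmong, M.procLt_iff hx hy]

lemma free_procLt {x y : Fin 3} : (procLt (P := P) (Lab := Lab) x y).free = {x, y} := by
  simp only [procLt, free_and, free]
  rw [← Finset.union_assoc, Finset.union_self, Finset.union_eq_left]
  exact free_sameLocAmong_subset

/-- `→_Φ` from `x` to `y`; `z` ranges over the events in between. -/
noncomputable def procLtAll (Φ : FO3 P Lab) (x y z : Fin 3) : FO3 P Lab :=
  .and (procLt x y) (.not (.ex z (.and (procLt x z) (.and (procLt z y) (.not Φ)))))

lemma sat_procLtAll {Φ : FO3 P Lab} {x y z : Fin 3} (hxz : x ≠ z) (hyz : y ≠ z)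
    {ν : Fin 3 → ℕ} (hx : ν x ∈ M.E) (hy : ν y ∈ M.E) {Q : ℕ → Prop}
    (hΦ : ∀ g ∈ M.E, Φ.sat M (update ν z g) ↔ Q g) :
    (procLtAll Φ x y z).sat M ν ↔
      M.procLt (ν x) (ν y) ∧ ∀ g, M.procLt (ν x) g → M.procLt g (ν y) → Q g := by
  have hbetween : (ex z (.and (procLt x z) (.and (procLt z y) (.not Φ)))).sat M ν ↔
      ∃ g, M.procLt (ν x) g ∧ M.procLt g (ν y) ∧ ¬ Q g := by
    refine sat_ex_iff (fun g hg => (M.procLt_mem hg.1).2) fun g hg => ?_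
    have hx' : update ν z g x = ν x := update_of_ne hxz ..
    have hy' : update ν z g y = ν y := update_of_ne hyz ..
    rw [sat_and, sat_and, sat, hΦ g hg, sat_procLt (by rwa [hx']) (by rwa [update_self]),
      sat_procLt (by rwa [update_self]) (by rwa [hy']), hx', hy', update_self]
  rw [procLtAll, sat_and, sat_procLt hx hy, sat, hbetween]
  simp only [not_exists, not_and, not_not]

end FO3

/-- For distinct `x y : Fin 3`, `-(x + y)` is the remaining variable. -/
def third (x y : Fin 3) : Fin 3 := -(x + y)

lemma ne_third_left : ∀ {x y : Fin 3}, x ≠ y → x ≠ third x y := by decide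

lemma ne_third_right : ∀ {x y : Fin 3}, x ≠ y → y ≠ third x y := by decide

lemma fin3_ne_add_one : ∀ x : Fin 3, x ≠ x + 1 := by decide

variable [Fintype P]

mutual
noncomputable def EF.toFO3 : EF P Lab → Fin 3 → FO3 P Lab
  | .proc p, x => .pred p x
  | .lab a, x => .lab a x
  | .or φ ψ, x => .or (φ.toFO3 x) (ψ.toFO3 x)
  | .not φ, x => .not (φ.toFO3 x)
  | .dia π φ, x => .ex (x + 1) (.and (π.toFO3 x (x + 1)) (φ.toFO3 (x + 1)))
  | .loop π, x => .ex (x + 1) (.and (.eq x (x + 1)) (π.toFO3 x (x + 1)))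

noncomputable def PF.toFO3 : PF P Lab → Fin 3 → Fin 3 → FO3 P Lab
  | .next, x, y => .edge x y
  | .prev, x, y => .edge y x
  | .msg p q, x, y => .and (.medge x y) (.and (.pred p x) (.pred q y))
  | .msgInv p q, x, y => .and (.medge y x) (.and (.pred p y) (.pred q x))
  | .nextG φ, x, y => .procLtAll (φ.toFO3 (third x y)) x y (third x y)
  | .prevG φ, x, y => .procLtAll (φ.toFO3 (third x y)) y x (third x y)
  | .jump p r, x, y => .and (.pred p x) (.pred r y)
  | .test φ, x, y => .and (.eq x y) (φ.toFO3 x)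
  | .comp π₁ π₂, x, y =>
      .ex (third x y) (.and (π₁.toFO3 x (third x y)) (π₂.toFO3 (third x y) y))
  | .union π₁ π₂, x, y => .or (π₁.toFO3 x y) (π₂.toFO3 x y)
  | .inter π₁ π₂, x, y => .and (π₁.toFO3 x y) (π₂.toFO3 x y)
  | .compl π, x, y => .not (π.toFO3 x y)
end

mutual
theorem EF.free_toFO3 : ∀ (φ : EF P Lab) (x : Fin 3), (φ.toFO3 x).free = {x}
  | .proc _, _ | .lab _, _ => rfl
  | .or φ ψ, x => by
      simp only [EF.toFO3, FO3.free, EF.free_toFO3 φ, EF.free_toFO3 ψ, Finset.union_self]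
  | .not φ, x => EF.free_toFO3 φ x
  | .dia π φ, x => by
      simp only [EF.toFO3, FO3.free, FO3.free_and, EF.free_toFO3 φ,
        PF.free_toFO3 π x (x + 1) (fin3_ne_add_one x)]
      revert x; decide
  | .loop π, x => by
      simp only [EF.toFO3, FO3.free, FO3.free_and,
        PF.free_toFO3 π x (x + 1) (fin3_ne_add_one x)]
      revert x; decide

theorem PF.free_toFO3 : ∀ (π : PF P Lab) (x y : Fin 3), x ≠ y → (π.toFO3 x y).free = {x, y}
  | .next, _, _, _ | .msg _ _, _, _, _ | .jump _ _, _, _, _ => by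
      simp [PF.toFO3, FO3.free]
  | .prev, _, _, _ | .msgInv _ _, _, _, _ => by
      simp [PF.toFO3, FO3.free, Finset.pair_comm]
  | .nextG φ, x, y, hxy => by
      simp only [PF.toFO3, FO3.procLtAll, FO3.free_and, FO3.free, FO3.free_procLt,
        EF.free_toFO3 φ]
      revert x y; decide
  | .prevG φ, x, y, hxy => by
      simp only [PF.toFO3, FO3.procLtAll, FO3.free_and, FO3.free, FO3.free_procLt,
        EF.free_toFO3 φ]
      revert x y; decide
  | .test φ, x, y, _ => by
      simp only [PF.toFO3, FO3.free_and, FO3.free, EF.free_toFO3 φ]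
      revert x y; decide
  | .comp π₁ π₂, x, y, hxy => by
      simp only [PF.toFO3, FO3.free_and, FO3.free,
        PF.free_toFO3 π₁ x (third x y) (ne_third_left hxy),
        PF.free_toFO3 π₂ (third x y) y (ne_third_right hxy).symm]
      revert x y; decide
  | .union π₁ π₂, x, y, hxy | .inter π₁ π₂, x, y, hxy => by
      simp only [PF.toFO3, FO3.free_and, FO3.free, PF.free_toFO3 π₁ x y hxy,
        PF.free_toFO3 π₂ x y hxy, Finset.union_self]
  | .compl π, x, y, hxy => PF.free_toFO3 π x y hxy
end

mutual
theorem EF.sat_toFO3 : ∀ (φ : EF P Lab) (x : Fin 3) (ν : Fin 3 → ℕ), ν x ∈ M.E →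
    ((φ.toFO3 x).sat M ν ↔ EF.sat M φ (ν x))
  | .proc _, _, _, hx | .lab _, _, _, hx => by
      simp [EF.toFO3, FO3.sat, EF.sat, hx]
  | .or φ ψ, x, ν, hx => or_congr (EF.sat_toFO3 φ x ν hx) (EF.sat_toFO3 ψ x ν hx)
  | .not φ, x, ν, hx => by
      rw [EF.toFO3, FO3.sat, EF.sat_toFO3 φ x ν hx, EF.sat, and_iff_right hx]
  | .dia π φ, x, ν, hx => by
      refine FO3.sat_ex_iff (fun _ h => EF.mem_of_sat h.2) fun g hg => ?_
      have hx' : update ν (x + 1) g x = ν x := update_of_ne (fin3_ne_add_one x) ..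
      rw [FO3.sat_and, PF.sat_toFO3 π x (x + 1) (fin3_ne_add_one x) _ (by rwa [hx'])
        (by rwa [update_self]), EF.sat_toFO3 φ (x + 1) _ (by rwa [update_self]), hx',
        update_self]
  | .loop π, x, ν, hx => by
      rw [EF.toFO3, FO3.sat_ex_iff (R := fun g => ν x = g ∧ PF.sem M π (ν x) g)
        (fun _ h => h.1 ▸ hx) fun g hg => ?_, exists_eq_left', EF.sat]
      have hx' : update ν (x + 1) g x = ν x := update_of_ne (fin3_ne_add_one x) ..
      rw [FO3.sat_and, FO3.sat, PF.sat_toFO3 π x (x + 1) (fin3_ne_add_one x) _ (by rwa [hx'])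
        (by rwa [update_self]), hx', update_self]

theorem PF.sat_toFO3 : ∀ (π : PF P Lab) (x y : Fin 3), x ≠ y → ∀ ν : Fin 3 → ℕ,
    ν x ∈ M.E → ν y ∈ M.E → ((π.toFO3 x y).sat M ν ↔ PF.sem M π (ν x) (ν y))
  | .next, _, _, _, _, _, _ | .prev, _, _, _, _, _, _ => Iff.rfl
  | .msg _ _, _, _, _, _, _, _ | .msgInv _ _, _, _, _, _, _, _ => by
      simp [PF.toFO3, FO3.sat, PF.sem]
  | .jump _ _, _, _, _, _, hx, hy => by
      simp [PF.toFO3, FO3.sat, PF.sem, hx, hy]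
  | .nextG φ, x, y, hxy, ν, hx, hy =>
      FO3.sat_procLtAll (ne_third_left hxy) (ne_third_right hxy) hx hy fun g hg => by
        rw [EF.sat_toFO3 φ _ _ (by rwa [update_self]), update_self]
  | .prevG φ, x, y, hxy, ν, hx, hy =>
      FO3.sat_procLtAll (ne_third_right hxy) (ne_third_left hxy) hy hx fun g hg => by
        rw [EF.sat_toFO3 φ _ _ (by rwa [update_self]), update_self]
  | .test φ, x, y, _, ν, hx, _ => by
      rw [PF.toFO3, FO3.sat_and, FO3.sat, EF.sat_toFO3 φ x ν hx, PF.sem]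
  | .comp π₁ π₂, x, y, hxy, ν, hx, hy => by
      refine FO3.sat_ex_iff (fun _ h => (PF.mem_of_sem h.1).2) fun g hg => ?_
      have hx' : update ν (third x y) g x = ν x := update_of_ne (ne_third_left hxy) ..
      have hy' : update ν (third x y) g y = ν y := update_of_ne (ne_third_right hxy) ..
      rw [FO3.sat_and, PF.sat_toFO3 π₁ x _ (ne_third_left hxy) _ (by rwa [hx'])
        (by rwa [update_self]), PF.sat_toFO3 π₂ _ y (ne_third_right hxy).symm _
        (by rwa [update_self]) (by rwa [hy']), hx', hy', update_self]
  | .union π₁ π₂, x, y, hxy, ν, hx, hy =>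
      or_congr (PF.sat_toFO3 π₁ x y hxy ν hx hy) (PF.sat_toFO3 π₂ x y hxy ν hx hy)
  | .inter π₁ π₂, x, y, hxy, ν, hx, hy => by
      rw [PF.toFO3, FO3.sat_and, PF.sat_toFO3 π₁ x y hxy ν hx hy,
        PF.sat_toFO3 π₂ x y hxy ν hx hy, PF.sem]
  | .compl π, x, y, hxy, ν, hx, hy => by
      rw [PF.toFO3, FO3.sat, PF.sat_toFO3 π x y hxy ν hx hy, PF.sem, and_iff_right hx,
        and_iff_right hy]
end

noncomputable def PDLS.toFO3 : PDLS P Lab → FO3 P Lab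
  | .ex φ => .ex 0 (φ.toFO3 0)
  | .or ξ ζ => .or ξ.toFO3 ζ.toFO3
  | .not ξ => .not ξ.toFO3

theorem PDLS.free_toFO3 : ∀ ξ : PDLS P Lab, ξ.toFO3.free = ∅
  | .ex φ => by simp [PDLS.toFO3, FO3.free, EF.free_toFO3]
  | .or ξ ζ => by simp [PDLS.toFO3, FO3.free, PDLS.free_toFO3 ξ, PDLS.free_toFO3 ζ]
  | .not ξ => PDLS.free_toFO3 ξ

theorem PDLS.sat_toFO3 (ν : Fin 3 → ℕ) : ∀ ξ : PDLS P Lab, ξ.toFO3.sat M ν ↔ PDLS.sat M ξ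
  | .ex φ => by
      rw [PDLS.toFO3, FO3.sat_ex_iff (R := fun g => g ∈ M.E ∧ EF.sat M φ g) (fun _ h => h.1)
        fun g hg => ?_, PDLS.sat]
      rw [EF.sat_toFO3 φ 0 _ (by rwa [update_self]), update_self, and_iff_right hg]
  | .or ξ ζ => or_congr (PDLS.sat_toFO3 ν ξ) (PDLS.sat_toFO3 ν ζ)
  | .not ξ => not_congr (PDLS.sat_toFO3 ν ξ)

/-- Every `PDLsf` sentence (resp. event formula, path formula)
is equivalent to an `FO³[→,◁,≤]` sentence (resp. formula with one free
variable `x = 0`, formula with two free variables `x = 0`, `y = 1`). -/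
theorem pdlsf_to_fo3 {P Lab : Type} [Fintype P] [Nonempty P] [Fintype Lab] [Nonempty Lab] :
    (∀ ξ : PDLS P Lab, ∃ Φ : FOS P Lab,
      Φ.noSets ∧ Φ.vars ⊆ {0, 1, 2} ∧ Φ.free = ∅ ∧
      ∀ M : MSC P Lab, (PDLS.sat M ξ ↔ FOS.sat M Φ (fun _ => 0) (fun _ => ∅))) ∧
    (∀ φ : EF P Lab, ∃ Φ : FOS P Lab,
      Φ.noSets ∧ Φ.vars ⊆ {0, 1, 2} ∧ Φ.free = {0} ∧
      ∀ M : MSC P Lab, ∀ e ∈ M.E,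
        (EF.sat M φ e ↔ FOS.sat M Φ (fun _ => e) (fun _ => ∅))) ∧
    (∀ π : PF P Lab, ∃ Φ : FOS P Lab,
      Φ.noSets ∧ Φ.vars ⊆ {0, 1, 2} ∧ Φ.free = {0, 1} ∧
      ∀ M : MSC P Lab, ∀ e ∈ M.E, ∀ f ∈ M.E,
        (PF.sem M π e f ↔
          FOS.sat M Φ (fun n => if n = 0 then e else f) (fun _ => ∅))) := by
  have hvars (Φ : FO3 P Lab) : Φ.toFOS.vars ⊆ {0, 1, 2} := Φ.vars_toFOS_subset.trans (by decide)
  refine ⟨fun ξ => ⟨ξ.toFO3.toFOS, FO3.noSets_toFOS _, hvars _, ?_, fun M => ?_⟩,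
    fun φ => ⟨(φ.toFO3 0).toFOS, FO3.noSets_toFOS _, hvars _, ?_, fun M e he => ?_⟩,
    fun π => ⟨(π.toFO3 0 1).toFOS, FO3.noSets_toFOS _, hvars _, ?_, fun M e he f hf => ?_⟩⟩
  · simp [FO3.free_toFOS, PDLS.free_toFO3]
  · rw [FO3.sat_toFOS, PDLS.sat_toFO3]
  · simp [FO3.free_toFOS, EF.free_toFO3]
  · rw [FO3.sat_toFOS, EF.sat_toFO3 φ 0 _ he]; rfl
  · simp [FO3.free_toFOS, PF.free_toFO3 π 0 1 (by decide)]
  · rw [FO3.sat_toFOS, PF.sat_toFO3 π 0 1 (by decide) _ he hf]; rfl
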